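/- arXiv:1104.4285 — 2 statements merged into one kernel-verified Lean document; each statement's English description precedes it below -/
import Mathlib

section
/- Let ℒ, 𝒵, ℳ be nonempty finite sets, let W be a channel from ℒ to 𝒵, let P be the uniform distribution on ℒ, and let P_{LZ}(ℓ, z) = W(z|ℓ)/|ℒ| be the induced joint distribution with marginal P_Z(z) = ∑_ℓ W(z|ℓ)/|ℒ|. Let (𝓕, μ) be a two-universal family of hash functions from ℒ to ℳ, and for f ∈ 𝓕 define the joint distribution q_f on ℳ × 𝒵 by q_f(m, z) = ∑_{ℓ : f(ℓ) = m} P_{LZ}(ℓ, z). Then for every ρ with 0 < ρ ≤ 1, ∑_{f ∈ 𝓕} μ(f) · exp(ρ · I(q_f)) ≤ 1 + (|ℳ|/|ℒ|)^ρ · exp(ψ(ρ, W, P)). -/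
/-!
Gibbs' inequality gives `I(q) ≤ ∑ q log (|M| q / q_Z)`, and Jensen's inequality for `exp` turns
this into `exp (ρ I(q)) ≤ |M|^ρ ∑ q^{1+ρ} q_Z^{-ρ}`.

For a hashed distribution, `q_f (f ℓ, z) = P_{LZ}(ℓ, z) + R_f(ℓ, z)`, where `R_f(ℓ, z)` is the
mass of the other inputs colliding with `ℓ` under `f`. Subadditivity of `t ↦ t^ρ` bounds
`∑_m q_f(m, z)^{1+ρ}` by `∑_ℓ P_{LZ}(ℓ, z)^{1+ρ} + ∑_ℓ P_{LZ}(ℓ, z) R_f(ℓ, z)^ρ`. Averaged over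
`f`, concavity of `t ↦ t^ρ` and two-universality give `E_f R_f(ℓ, z)^ρ ≤ (P_Z(z) / |M|)^ρ`, so the
collision terms contribute at most `1`. For the uniform input distribution the remaining term is
`(|M| / |L|)^ρ` times the sum inside `ψ`.
-/

open Finset

/-- Mutual information of a joint distribution `q` on `A × B` (natural logarithm);
terms with `q (a, b) = 0` contribute `0` since `0 * log _ = 0`. -/
noncomputable def mutInfo {A B : Type*} [Fintype A] [Fintype B] (q : A × B → ℝ) : ℝ :=
  ∑ p : A × B, q p * Real.log (q p / ((∑ b, q (p.1, b)) * (∑ a, q (a, p.2))))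

/-- The function `ψ(ρ, W, P) = log ∑_{(z,ℓ) : P_Z z > 0} P(ℓ) W(z|ℓ)^{1+ρ} P_Z(z)^{-ρ}`,
where `P_Z(z) = ∑_ℓ P(ℓ) W(z|ℓ)`. -/
noncomputable def psiFun {L Z : Type*} [Fintype L] [Fintype Z]
    (ρ : ℝ) (W : L → Z → ℝ) (P : L → ℝ) : ℝ :=
  Real.log (∑ p ∈ univ.filter (fun p : Z × L => 0 < ∑ ℓ, P ℓ * W ℓ p.1),
    P p.2 * W p.2 p.1 ^ (1 + ρ) * (∑ ℓ, P ℓ * W ℓ p.1) ^ (-ρ))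

open Real

theorem sum_mul_log_mul_card_nonneg {ι : Type*} [Fintype ι] [Nonempty ι] (w : ι → ℝ)
    (hw : ∀ i, 0 ≤ w i) (hw1 : ∑ i, w i = 1) :
    0 ≤ ∑ i, w i * log (w i * Fintype.card ι) := by
  set n : ℝ := (Fintype.card ι : ℝ)
  have hn : 0 < n := by simp only [n]; exact_mod_cast Fintype.card_pos
  -- Jensen for `t ↦ t log t` at the points `n w i`, with uniform weights `1 / n`
  have h := convexOn_mul_log.map_sum_le (t := univ) (w := fun _ => 1 / n) (p := fun i => n * w i)
    (fun _ _ => by positivity) (by simp only [sum_const, card_univ, nsmul_eq_mul, n]; field_simp)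
    (fun i _ => mul_nonneg hn.le (hw i))
  have hmean : ∑ i, (1 / n) • (n * w i) = 1 := by
    simp only [smul_eq_mul, ← mul_assoc, one_div_mul_cancel hn.ne', one_mul, hw1]
  rw [hmean, one_mul, log_one] at h
  refine h.trans_eq (sum_congr rfl fun i _ => ?_)
  rw [smul_eq_mul, mul_comm (w i) n]
  field_simp

section MutualInformation

variable {A B : Type*} [Fintype A] [Fintype B] [Nonempty A]

theorem mutInfo_le_sum_mul_log (q : A × B → ℝ) (hq : ∀ x, 0 ≤ q x) (hq1 : ∑ x, q x = 1) :
    mutInfo q ≤ ∑ x, q x * log (q x * Fintype.card A / ∑ a, q (a, x.2)) := by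
  set n : ℝ := (Fintype.card A : ℝ)
  have hn : 0 < n := by simp only [n]; exact_mod_cast Fintype.card_pos
  set qA : A → ℝ := fun a => ∑ b, q (a, b)
  have hqA : ∀ a, 0 ≤ qA a := fun a => sum_nonneg fun b _ => hq _
  have hqA1 : ∑ a, qA a = 1 := by rw [← hq1, Fintype.sum_prod_type]
  have hterm : ∀ x : A × B, q x * log (q x * n / ∑ a, q (a, x.2)) =
      q x * log (q x / (qA x.1 * ∑ a, q (a, x.2))) + q x * log (qA x.1 * n) := by
    rintro ⟨a, b⟩
    rcases (hq (a, b)).eq_or_lt with h0 | h0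
    · simp [← h0]
    have hA : 0 < qA a := h0.trans_le (single_le_sum (fun b _ => hq (a, b)) (mem_univ b))
    have hB : 0 < ∑ a', q (a', b) :=
      h0.trans_le (single_le_sum (fun a' _ => hq (a', b)) (mem_univ a))
    rw [← mul_add, ← log_mul (by positivity) (by positivity)]
    congr 2
    field_simp
  have hmarginal : ∑ x : A × B, q x * log (qA x.1 * n) = ∑ a, qA a * log (qA a * n) := by
    simp only [Fintype.sum_prod_type, qA, sum_mul]
  rw [sum_congr rfl fun x _ => hterm x, sum_add_distrib, hmarginal, mutInfo]
  exact le_add_of_nonneg_right (sum_mul_log_mul_card_nonneg qA hqA hqA1)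

theorem exp_mul_mutInfo_le (q : A × B → ℝ) (hq : ∀ x, 0 ≤ q x) (hq1 : ∑ x, q x = 1)
    {ρ : ℝ} (hρ : 0 ≤ ρ) :
    exp (ρ * mutInfo q) ≤
      (Fintype.card A : ℝ) ^ ρ * ∑ x, q x ^ (1 + ρ) * (∑ a, q (a, x.2)) ^ (-ρ) := by
  set n : ℝ := (Fintype.card A : ℝ)
  have hn : 0 < n := by simp only [n]; exact_mod_cast Fintype.card_pos
  set t : A × B → ℝ := fun x => q x * n / ∑ a, q (a, x.2)
  have hterm : ∀ x,
      q x * exp (ρ * log (t x)) = n ^ ρ * (q x ^ (1 + ρ) * (∑ a, q (a, x.2)) ^ (-ρ)) := by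
    rintro ⟨a, b⟩
    rcases (hq (a, b)).eq_or_lt with h0 | h0
    · simp [← h0, zero_rpow (by positivity : 1 + ρ ≠ 0)]
    have hB : 0 < ∑ a', q (a', b) :=
      h0.trans_le (single_le_sum (fun a' _ => hq (a', b)) (mem_univ a))
    rw [mul_comm ρ, ← rpow_def_of_pos (by positivity), div_rpow (by positivity) hB.le,
      mul_rpow h0.le hn.le, rpow_neg hB.le, rpow_one_add' h0.le (by positivity)]
    ring
  calc exp (ρ * mutInfo q)
      ≤ exp (∑ x, q x * (ρ * log (t x))) := by
        rw [exp_le_exp]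
        simp only [mul_left_comm _ ρ, ← mul_sum]
        exact mul_le_mul_of_nonneg_left (mutInfo_le_sum_mul_log q hq hq1) hρ
    _ ≤ ∑ x, q x * exp (ρ * log (t x)) := by
        simpa using convexOn_exp.map_sum_le (t := univ) (w := q) (p := fun x => ρ * log (t x))
          (fun x _ => hq x) hq1 (fun _ _ => Set.mem_univ _)
    _ = _ := by rw [mul_sum]; exact sum_congr rfl fun x _ => hterm x

end MutualInformation

section Hashing

variable {F L M : Type*} [Fintype F] [Fintype L] [Fintype M] [DecidableEq M]

def IsTwoUniversal (hash : F → L → M) (μ : F → ℝ) : Prop :=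
  ∀ x₁ x₂ : L, x₁ ≠ x₂ → ∑ f with hash f x₁ = hash f x₂, μ f ≤ 1 / (Fintype.card M : ℝ)

theorem sum_fiber_rpow_one_add_le [DecidableEq L] (h : L → M) {x : L → ℝ} (hx : ∀ ℓ, 0 ≤ x ℓ)
    {ρ : ℝ} (hρ0 : 0 ≤ ρ) (hρ1 : ρ ≤ 1) :
    ∑ m, (∑ ℓ with h ℓ = m, x ℓ) ^ (1 + ρ) ≤
      ∑ ℓ, x ℓ ^ (1 + ρ) + ∑ ℓ, x ℓ * (∑ ℓ' ∈ univ.erase ℓ with h ℓ' = h ℓ, x ℓ') ^ ρ := by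
  have hρ : 1 + ρ ≠ 0 := by positivity
  have hsplit : ∀ ℓ, ∑ ℓ' with h ℓ' = h ℓ, x ℓ' = x ℓ + ∑ ℓ' ∈ univ.erase ℓ with h ℓ' = h ℓ, x ℓ' :=
    fun ℓ => by rw [filter_erase, add_sum_erase _ _ (by simp)]
  calc ∑ m, (∑ ℓ with h ℓ = m, x ℓ) ^ (1 + ρ)
      = ∑ m, ∑ ℓ with h ℓ = m, x ℓ * (∑ ℓ' with h ℓ' = h ℓ, x ℓ') ^ ρ := by
        refine sum_congr rfl fun m _ => ?_
        rw [rpow_one_add' (sum_nonneg fun ℓ _ => hx ℓ) hρ, sum_mul]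
        exact sum_congr rfl fun ℓ hℓ => by rw [(mem_filter.1 hℓ).2]
    _ = ∑ ℓ, x ℓ * (x ℓ + ∑ ℓ' ∈ univ.erase ℓ with h ℓ' = h ℓ, x ℓ') ^ ρ := by
        rw [sum_fiberwise univ h]; simp only [hsplit]
    _ ≤ ∑ ℓ, x ℓ * (x ℓ ^ ρ + (∑ ℓ' ∈ univ.erase ℓ with h ℓ' = h ℓ, x ℓ') ^ ρ) := by
        gcongr with ℓ
        · exact hx ℓ
        · exact rpow_add_le_add_rpow (hx ℓ) (sum_nonneg fun _ _ => hx _) hρ0 hρ1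
    _ = _ := by simp only [mul_add, sum_add_distrib, rpow_one_add' (hx _) hρ]

theorem sum_mul_sum_collision_le [DecidableEq L] (hash : F → L → M) (μ : F → ℝ)
    (h2u : IsTwoUniversal hash μ) {x : L → ℝ} (hx : ∀ ℓ, 0 ≤ x ℓ) (ℓ : L) :
    ∑ f, μ f * ∑ ℓ' ∈ univ.erase ℓ with hash f ℓ' = hash f ℓ, x ℓ' ≤
      (∑ ℓ', x ℓ') / Fintype.card M := by
  calc ∑ f, μ f * ∑ ℓ' ∈ univ.erase ℓ with hash f ℓ' = hash f ℓ, x ℓ'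
      = ∑ ℓ' ∈ univ.erase ℓ, x ℓ' * ∑ f with hash f ℓ' = hash f ℓ, μ f := by
        simp only [sum_filter, mul_sum, mul_ite, mul_zero]
        rw [sum_comm]
        exact sum_congr rfl fun ℓ' _ => sum_congr rfl fun f _ => by split_ifs <;> ring
    _ ≤ ∑ ℓ' ∈ univ.erase ℓ, x ℓ' * (1 / Fintype.card M) := by
        gcongr with ℓ' hℓ'
        · exact hx ℓ'
        · exact h2u ℓ' ℓ (ne_of_mem_erase hℓ')
    _ ≤ ∑ ℓ', x ℓ' * (1 / Fintype.card M) :=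
        sum_le_sum_of_subset_of_nonneg (subset_univ _) fun ℓ' _ _ => by
          have := hx ℓ'; positivity
    _ = _ := by rw [← sum_mul, mul_one_div]

theorem sum_mul_sum_collision_rpow_le [DecidableEq L] (hash : F → L → M) (μ : F → ℝ)
    (h2u : IsTwoUniversal hash μ) (hμ : ∀ f, 0 ≤ μ f) (hμ1 : ∑ f, μ f = 1)
    {x : L → ℝ} (hx : ∀ ℓ, 0 ≤ x ℓ) (ℓ : L) {ρ : ℝ} (hρ0 : 0 ≤ ρ) (hρ1 : ρ ≤ 1) :
    ∑ f, μ f * (∑ ℓ' ∈ univ.erase ℓ with hash f ℓ' = hash f ℓ, x ℓ') ^ ρ ≤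
      ((∑ ℓ', x ℓ') / Fintype.card M) ^ ρ := by
  have hR : ∀ f, 0 ≤ ∑ ℓ' ∈ univ.erase ℓ with hash f ℓ' = hash f ℓ, x ℓ' :=
    fun f => sum_nonneg fun _ _ => hx _
  calc ∑ f, μ f * (∑ ℓ' ∈ univ.erase ℓ with hash f ℓ' = hash f ℓ, x ℓ') ^ ρ
      ≤ (∑ f, μ f * ∑ ℓ' ∈ univ.erase ℓ with hash f ℓ' = hash f ℓ, x ℓ') ^ ρ := by
        simpa using (concaveOn_rpow hρ0 hρ1).le_map_sum (t := univ) (w := μ)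
          (fun f _ => hμ f) hμ1 (fun f _ => hR f)
    _ ≤ _ := rpow_le_rpow (sum_nonneg fun f _ => mul_nonneg (hμ f) (hR f))
        (sum_mul_sum_collision_le hash μ h2u hx ℓ) hρ0

theorem sum_mul_sum_fiber_rpow_one_add_le [DecidableEq L] (hash : F → L → M) (μ : F → ℝ)
    (h2u : IsTwoUniversal hash μ) (hμ : ∀ f, 0 ≤ μ f) (hμ1 : ∑ f, μ f = 1)
    {x : L → ℝ} (hx : ∀ ℓ, 0 ≤ x ℓ) {ρ : ℝ} (hρ0 : 0 ≤ ρ) (hρ1 : ρ ≤ 1) :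
    ∑ f, μ f * ∑ m, (∑ ℓ with hash f ℓ = m, x ℓ) ^ (1 + ρ) ≤
      ∑ ℓ, x ℓ ^ (1 + ρ) + (∑ ℓ, x ℓ) * ((∑ ℓ, x ℓ) / Fintype.card M) ^ ρ := by
  set R : F → L → ℝ := fun f ℓ => ∑ ℓ' ∈ univ.erase ℓ with hash f ℓ' = hash f ℓ, x ℓ'
  calc ∑ f, μ f * ∑ m, (∑ ℓ with hash f ℓ = m, x ℓ) ^ (1 + ρ)
      ≤ ∑ f, μ f * (∑ ℓ, x ℓ ^ (1 + ρ) + ∑ ℓ, x ℓ * R f ℓ ^ ρ) := by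
        gcongr with f
        · exact hμ f
        · exact sum_fiber_rpow_one_add_le (hash f) hx hρ0 hρ1
    _ = ∑ ℓ, x ℓ ^ (1 + ρ) + ∑ ℓ, x ℓ * ∑ f, μ f * R f ℓ ^ ρ := by
        rw [sum_congr rfl fun f _ => mul_add _ _ _, sum_add_distrib, ← sum_mul, hμ1, one_mul]
        simp only [mul_sum]
        rw [sum_comm]
        simp only [mul_left_comm]
    _ ≤ ∑ ℓ, x ℓ ^ (1 + ρ) + ∑ ℓ, x ℓ * ((∑ ℓ, x ℓ) / Fintype.card M) ^ ρ := by
        gcongr with ℓ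
        · exact hx ℓ
        · exact sum_mul_sum_collision_rpow_le hash μ h2u hμ hμ1 hx ℓ hρ0 hρ1
    _ = _ := by rw [← sum_mul]

end Hashing

theorem sum_mul_exp_mutInfo_hash_le {F L M Z : Type*} [Fintype F] [Fintype L] [Fintype M]
    [Fintype Z] [Nonempty M] [DecidableEq M] (p : L × Z → ℝ) (hp : ∀ y, 0 ≤ p y)
    (hp1 : ∑ y, p y = 1) (hash : F → L → M) (μ : F → ℝ) (h2u : IsTwoUniversal hash μ)
    (hμ : ∀ f, 0 ≤ μ f) (hμ1 : ∑ f, μ f = 1) {ρ : ℝ} (hρ0 : 0 ≤ ρ) (hρ1 : ρ ≤ 1) :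
    ∑ f, μ f * exp (ρ * mutInfo (fun y : M × Z => ∑ ℓ with hash f ℓ = y.1, p (ℓ, y.2))) ≤
      1 + (Fintype.card M : ℝ) ^ ρ * ∑ y : L × Z, p y ^ (1 + ρ) * (∑ ℓ, p (ℓ, y.2)) ^ (-ρ) := by
  classical
  set n : ℝ := (Fintype.card M : ℝ)
  have hn : 0 < n := by simp only [n]; exact_mod_cast Fintype.card_pos
  set pZ : Z → ℝ := fun z => ∑ ℓ, p (ℓ, z)
  have hpZ : ∀ z, 0 ≤ pZ z := fun z => sum_nonneg fun ℓ _ => hp _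
  set q : F → M × Z → ℝ := fun f y => ∑ ℓ with hash f ℓ = y.1, p (ℓ, y.2)
  have hq : ∀ f y, 0 ≤ q f y := fun f y => sum_nonneg fun ℓ _ => hp _
  have hmarg : ∀ f z, ∑ m, q f (m, z) = pZ z := fun f z =>
    sum_fiberwise univ (hash f) (fun ℓ => p (ℓ, z))
  have hpZ1 : ∑ z, pZ z = 1 := by rw [← hp1, Fintype.sum_prod_type_right]
  have hq1 : ∀ f, ∑ y, q f y = 1 := fun f => by
    rw [Fintype.sum_prod_type_right, ← hpZ1]
    exact sum_congr rfl fun z _ => hmarg f z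
  have hcoll : ∀ z, n ^ ρ * (pZ z ^ (-ρ) * (pZ z * (pZ z / n) ^ ρ)) ≤ pZ z := fun z => by
    rw [div_rpow (hpZ z) hn.le, rpow_neg (hpZ z)]
    calc n ^ ρ * ((pZ z ^ ρ)⁻¹ * (pZ z * (pZ z ^ ρ / n ^ ρ)))
        = pZ z * ((pZ z ^ ρ)⁻¹ * pZ z ^ ρ) := by field_simp
      _ ≤ pZ z := mul_le_of_le_one_right (hpZ z) inv_mul_le_one
  calc ∑ f, μ f * exp (ρ * mutInfo (q f))
      ≤ ∑ f, μ f * (n ^ ρ * ∑ z, pZ z ^ (-ρ) * ∑ m, q f (m, z) ^ (1 + ρ)) := by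
        gcongr with f
        · exact hμ f
        · refine (exp_mul_mutInfo_le (q f) (hq f) (hq1 f) hρ0).trans_eq ?_
          simp only [hmarg, Fintype.sum_prod_type_right, mul_sum, mul_comm]
          rfl
    _ = n ^ ρ * ∑ z, pZ z ^ (-ρ) * ∑ f, μ f * ∑ m, q f (m, z) ^ (1 + ρ) := by
        simp only [mul_sum]
        rw [sum_comm]
        simp only [mul_left_comm]
    _ ≤ n ^ ρ * ∑ z, pZ z ^ (-ρ) * (∑ ℓ, p (ℓ, z) ^ (1 + ρ) + pZ z * (pZ z / n) ^ ρ) := by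
        gcongr with z
        · exact rpow_nonneg (hpZ z) _
        · exact sum_mul_sum_fiber_rpow_one_add_le hash μ h2u hμ hμ1 (fun ℓ => hp (ℓ, z)) hρ0 hρ1
    _ = n ^ ρ * ∑ y : L × Z, p y ^ (1 + ρ) * pZ y.2 ^ (-ρ) +
          ∑ z, n ^ ρ * (pZ z ^ (-ρ) * (pZ z * (pZ z / n) ^ ρ)) := by
        simp only [mul_add, sum_add_distrib, Fintype.sum_prod_type_right, mul_sum, mul_comm]
    _ ≤ n ^ ρ * ∑ y : L × Z, p y ^ (1 + ρ) * pZ y.2 ^ (-ρ) + ∑ z, pZ z := by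
        gcongr with z; exact hcoll z
    _ = _ := by rw [hpZ1, add_comm]

section UniformInput

variable {L Z : Type*} [Fintype L] [Fintype Z]

theorem sum_mul_rpow_one_add_of_const (P : L → ℝ) (W : L → Z → ℝ) (g : Z → ℝ) {c ρ : ℝ}
    (hP : ∀ ℓ, P ℓ = c) (hc : 0 ≤ c) (hW : ∀ ℓ z, 0 ≤ W ℓ z) (hρ : 0 ≤ ρ) :
    ∑ y : L × Z, (P y.1 * W y.1 y.2) ^ (1 + ρ) * g y.2 =
      c ^ ρ * ∑ y : Z × L, P y.2 * W y.2 y.1 ^ (1 + ρ) * g y.1 := by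
  rw [mul_sum, ← (Equiv.prodComm L Z).sum_comp]
  refine sum_congr rfl fun y _ => ?_
  simp only [Equiv.prodComm_apply, Prod.fst_swap, Prod.snd_swap, hP,
    mul_rpow hc (hW _ _), rpow_one_add' hc (by positivity : 1 + ρ ≠ 0)]
  ring

theorem sum_le_exp_psiFun (W : L → Z → ℝ) (P : L → ℝ) (hW : ∀ ℓ z, 0 ≤ W ℓ z)
    (hP : ∀ ℓ, 0 ≤ P ℓ) {ρ : ℝ} (hρ : ρ ≠ 0) :
    ∑ y : Z × L, P y.2 * W y.2 y.1 ^ (1 + ρ) * (∑ ℓ, P ℓ * W ℓ y.1) ^ (-ρ) ≤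
      exp (psiFun ρ W P) := by
  rw [psiFun, sum_filter_of_ne]
  · exact le_exp_log _
  intro y _ hy
  refine (sum_nonneg fun ℓ _ => mul_nonneg (hP ℓ) (hW ℓ y.1)).lt_of_ne fun h0 => hy ?_
  rw [← h0, zero_rpow (neg_ne_zero.2 hρ), mul_zero]

end UniformInput

theorem privacy_amplification_uniform_general
    {L Z M F : Type*} [Fintype L] [Fintype Z] [Fintype M] [Fintype F]
    [Nonempty L] [Nonempty M] [DecidableEq M]
    (W : L → Z → ℝ) (hWnn : ∀ ℓ z, 0 ≤ W ℓ z) (hWsum : ∀ ℓ, ∑ z, W ℓ z = 1)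
    (P : L → ℝ) (hP : ∀ ℓ, P ℓ = 1 / (Fintype.card L : ℝ))
    (PLZ : L × Z → ℝ) (hPLZ : ∀ ℓ z, PLZ (ℓ, z) = W ℓ z / (Fintype.card L : ℝ))
    (hash : F → L → M) (μ : F → ℝ)
    (hμnn : ∀ f, 0 ≤ μ f) (hμsum : ∑ f, μ f = 1)
    (h2u : ∀ x₁ x₂ : L, x₁ ≠ x₂ →
      ∑ f ∈ univ.filter (fun f => hash f x₁ = hash f x₂), μ f ≤ 1 / (Fintype.card M : ℝ))
    (q : F → M × Z → ℝ)
    (hq : ∀ f m z, q f (m, z) = ∑ ℓ ∈ univ.filter (fun ℓ => hash f ℓ = m), PLZ (ℓ, z))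
    (ρ : ℝ) (hρ0 : 0 < ρ) (hρ1 : ρ ≤ 1) :
    ∑ f, μ f * Real.exp (ρ * mutInfo (q f)) ≤
      1 + ((Fintype.card M : ℝ) / (Fintype.card L : ℝ)) ^ ρ *
        Real.exp (psiFun ρ W P) := by
  have hL : (0 : ℝ) < Fintype.card L := by exact_mod_cast Fintype.card_pos
  have hPnn : ∀ ℓ, 0 ≤ P ℓ := fun ℓ => by rw [hP]; positivity
  have hPLZ' : PLZ = fun y => P y.1 * W y.1 y.2 := funext fun y => by
    rw [hP, one_div_mul_eq_div, ← hPLZ]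
  have hq' : q = fun f y => ∑ ℓ with hash f ℓ = y.1, PLZ (ℓ, y.2) :=
    funext fun f => funext fun y => hq f y.1 y.2
  have hPLZ1 : ∑ y, PLZ y = 1 := by
    simp only [hPLZ', Fintype.sum_prod_type, ← mul_sum, hWsum, mul_one, sum_const, hP,
      card_univ, nsmul_eq_mul]
    field_simp
  subst hq' hPLZ'
  calc ∑ f, μ f * exp (ρ * mutInfo _)
      ≤ 1 + (Fintype.card M : ℝ) ^ ρ * ∑ y : L × Z, (P y.1 * W y.1 y.2) ^ (1 + ρ) *
          (∑ ℓ, P ℓ * W ℓ y.2) ^ (-ρ) :=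
        sum_mul_exp_mutInfo_hash_le _ (fun y => mul_nonneg (hPnn _) (hWnn _ _)) hPLZ1 hash μ
          h2u hμnn hμsum hρ0.le hρ1
    _ = 1 + ((Fintype.card M : ℝ) / Fintype.card L) ^ ρ *
          ∑ y : Z × L, P y.2 * W y.2 y.1 ^ (1 + ρ) * (∑ ℓ, P ℓ * W ℓ y.1) ^ (-ρ) := by
        rw [sum_mul_rpow_one_add_of_const P W (fun z => (∑ ℓ, P ℓ * W ℓ z) ^ (-ρ)) hP
          (by positivity) hWnn hρ0.le, ← mul_assoc, ← mul_rpow (by positivity) (by positivity),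
          mul_one_div]
    _ ≤ _ := by gcongr; exact sum_le_exp_psiFun W P hWnn hPnn hρ0.ne'

/-- Privacy amplification for a channel `W : L → Z` with uniform input distribution:
`∑_f μ(f) exp(ρ I(q_f)) ≤ 1 + (|M|/|L|)^ρ exp(ψ(ρ, W, P))`. -/
theorem privacy_amplification_uniform
    {L Z M F : Type*} [Fintype L] [Fintype Z] [Fintype M] [Fintype F]
    [Nonempty L] [Nonempty Z] [Nonempty M] [Nonempty F] [DecidableEq M]
    (W : L → Z → ℝ) (hWnn : ∀ ℓ z, 0 ≤ W ℓ z) (hWsum : ∀ ℓ, ∑ z, W ℓ z = 1)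
    (P : L → ℝ) (hP : ∀ ℓ, P ℓ = 1 / (Fintype.card L : ℝ))
    (PLZ : L × Z → ℝ) (hPLZ : ∀ ℓ z, PLZ (ℓ, z) = W ℓ z / (Fintype.card L : ℝ))
    (PZ : Z → ℝ) (hPZ : ∀ z, PZ z = ∑ ℓ, W ℓ z / (Fintype.card L : ℝ))
    (hash : F → L → M) (μ : F → ℝ)
    (hμnn : ∀ f, 0 ≤ μ f) (hμsum : ∑ f, μ f = 1)
    (h2u : ∀ x₁ x₂ : L, x₁ ≠ x₂ →
      ∑ f ∈ univ.filter (fun f => hash f x₁ = hash f x₂), μ f ≤ 1 / (Fintype.card M : ℝ))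
    (q : F → M × Z → ℝ)
    (hq : ∀ f m z, q f (m, z) = ∑ ℓ ∈ univ.filter (fun ℓ => hash f ℓ = m), PLZ (ℓ, z))
    (ρ : ℝ) (hρ0 : 0 < ρ) (hρ1 : ρ ≤ 1) :
    ∑ f, μ f * Real.exp (ρ * mutInfo (q f)) ≤
      1 + ((Fintype.card M : ℝ) / (Fintype.card L : ℝ)) ^ ρ *
        Real.exp (psiFun ρ W P) :=
  privacy_amplification_uniform_general W hWnn hWsum P hP PLZ hPLZ hash μ hμnn hμsum h2u q hq ρ hρ0
    hρ1
end

section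
/- Let 𝒰, 𝒱, 𝒵 be nonempty finite sets, P_U a probability distribution on 𝒰, P_{V|U} a channel from 𝒰 to 𝒱, W a channel from 𝒱 to 𝒵, and n a positive natural number. Define the n-fold i.i.d. extensions: P_U^n on 𝒰^n by P_U^n(u) = ∏_{i<n} P_U(u_i), the channel P_{V|U}^n from 𝒰^n to 𝒱^n by P_{V|U}^n(v|u) = ∏_{i<n} P_{V|U}(v_i|u_i), and the channel W^n from 𝒱^n to 𝒵^n by W^n(z|v) = ∏_{i<n} W(z_i|v_i). Then for every ρ with 0 < ρ < 1, the averaged Gallager function is additive: φ(ρ, W^n, P_{V|U}^n, P_U^n) = n · φ(ρ, W, P_{V|U}, P_U). -/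
/-!
For product sources and channels, each of the three nested sums in the Gallager function runs
over a product alphabet, and its summand factors over the coordinates once
`(∏ i, x i) ^ p = ∏ i, x i ^ p` is applied, which is valid because the `x i` are nonnegative.
Distributivity `∑ ∏ = ∏ ∑` then makes the argument of the logarithm multiplicative over the
coordinates (even for non-identical ones), so in the i.i.d. case it is an `n`-th power and the
logarithm turns the power into the factor `n`.
-/

open Finset

/-- The averaged Gallager function
`φ(ρ, W, P_{V|U}, P_U) = log ∑_u P_U(u) ∑_z (∑_v P_{V|U}(v|u) W(z|v)^{1/(1-ρ)})^{1-ρ}`. -/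
noncomputable def avgPhi {U V Z : Type*} [Fintype U] [Fintype V] [Fintype Z]
    (ρ : ℝ) (W : V → Z → ℝ) (PVU : U → V → ℝ) (PU : U → ℝ) : ℝ :=
  Real.log (∑ u, PU u * ∑ z, (∑ v, PVU u v * W v z ^ (1 / (1 - ρ))) ^ (1 - ρ))

noncomputable def gallagerSum {U V Z : Type*} [Fintype U] [Fintype V] [Fintype Z]
    (ρ : ℝ) (W : V → Z → ℝ) (PVU : U → V → ℝ) (PU : U → ℝ) : ℝ :=
  ∑ u, PU u * ∑ z, (∑ v, PVU u v * W v z ^ (1 / (1 - ρ))) ^ (1 - ρ)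

theorem avgPhi_eq_log_gallagerSum {U V Z : Type*} [Fintype U] [Fintype V] [Fintype Z]
    (ρ : ℝ) (W : V → Z → ℝ) (PVU : U → V → ℝ) (PU : U → ℝ) :
    avgPhi ρ W PVU PU = Real.log (gallagerSum ρ W PVU PU) :=
  rfl

section Product

variable {ι : Type*} [Fintype ι] [DecidableEq ι]

namespace Real

variable {κ : ι → Type*} [∀ i, Fintype (κ i)]

theorem sum_pi_prod_mul_prod_rpow (a b : ∀ i, κ i → ℝ) (hb : ∀ i k, 0 ≤ b i k) (p : ℝ) :
    ∑ x : ∀ i, κ i, (∏ i, a i (x i)) * (∏ i, b i (x i)) ^ p = ∏ i, ∑ k, a i k * b i k ^ p := by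
  simp_rw [← finsetProd_rpow _ _ (fun i _ => hb i _), ← prod_mul_distrib]
  rw [Fintype.prod_sum]

theorem sum_pi_prod_rpow (b : ∀ i, κ i → ℝ) (hb : ∀ i k, 0 ≤ b i k) (p : ℝ) :
    ∑ x : ∀ i, κ i, (∏ i, b i (x i)) ^ p = ∏ i, ∑ k, b i k ^ p := by
  simpa using sum_pi_prod_mul_prod_rpow (κ := κ) (fun _ _ => 1) b hb p

end Real

variable {U V Z : ι → Type*} [∀ i, Fintype (U i)] [∀ i, Fintype (V i)] [∀ i, Fintype (Z i)]

theorem gallagerSum_pi (ρ : ℝ) (W : ∀ i, V i → Z i → ℝ) (PVU : ∀ i, U i → V i → ℝ)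
    (PU : ∀ i, U i → ℝ) (hPVU : ∀ i u v, 0 ≤ PVU i u v) (hW : ∀ i v z, 0 ≤ W i v z) :
    gallagerSum ρ (fun (v : ∀ i, V i) (z : ∀ i, Z i) => ∏ i, W i (v i) (z i))
        (fun (u : ∀ i, U i) (v : ∀ i, V i) => ∏ i, PVU i (u i) (v i))
        (fun (u : ∀ i, U i) => ∏ i, PU i (u i)) =
      ∏ i, gallagerSum ρ (W i) (PVU i) (PU i) := by
  have sum_V (u : ∀ i, U i) (z : ∀ i, Z i) :
      ∑ v : ∀ i, V i, (∏ i, PVU i (u i) (v i)) * (∏ i, W i (v i) (z i)) ^ (1 / (1 - ρ)) =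
        ∏ i, ∑ v, PVU i (u i) v * W i v (z i) ^ (1 / (1 - ρ)) :=
    Real.sum_pi_prod_mul_prod_rpow _ _ (fun i v => hW i v (z i)) _
  have sum_Z (u : ∀ i, U i) :
      ∑ z : ∀ i, Z i, (∏ i, ∑ v, PVU i (u i) v * W i v (z i) ^ (1 / (1 - ρ))) ^ (1 - ρ) =
        ∏ i, ∑ z, (∑ v, PVU i (u i) v * W i v z ^ (1 / (1 - ρ))) ^ (1 - ρ) :=
    Real.sum_pi_prod_rpow _ (fun i z => sum_nonneg fun v _ =>
      mul_nonneg (hPVU i (u i) v) (Real.rpow_nonneg (hW i v z) _)) _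
  simp only [gallagerSum, sum_V, sum_Z, ← prod_mul_distrib]
  rw [Fintype.prod_sum]

end Product

theorem avgPhi_iid_additive_general
    {U V Z : Type*} [Fintype U] [Fintype V] [Fintype Z]
    (PU : U → ℝ)
    (PVU : U → V → ℝ) (hPVUnn : ∀ u v, 0 ≤ PVU u v)
    (W : V → Z → ℝ) (hWnn : ∀ v z, 0 ≤ W v z)
    (n : ℕ)
    (ρ : ℝ) :
    avgPhi ρ
        (fun (v : Fin n → V) (z : Fin n → Z) => ∏ i, W (v i) (z i))
        (fun (u : Fin n → U) (v : Fin n → V) => ∏ i, PVU (u i) (v i))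
        (fun (u : Fin n → U) => ∏ i, PU (u i)) =
      n * avgPhi ρ W PVU PU := by
  rw [avgPhi_eq_log_gallagerSum, avgPhi_eq_log_gallagerSum,
    gallagerSum_pi ρ (fun _ => W) (fun _ => PVU) (fun _ => PU) (fun _ => hPVUnn) (fun _ => hWnn),
    prod_const, card_univ, Fintype.card_fin, Real.log_pow]

/-- The averaged Gallager function is additive under `n`-fold i.i.d. extension:
`φ(ρ, W^n, P_{V|U}^n, P_U^n) = n · φ(ρ, W, P_{V|U}, P_U)`. -/
theorem avgPhi_iid_additive
    {U V Z : Type*} [Fintype U] [Fintype V] [Fintype Z]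
    [Nonempty U] [Nonempty V] [Nonempty Z]
    (PU : U → ℝ) (hPUnn : ∀ u, 0 ≤ PU u) (hPUsum : ∑ u, PU u = 1)
    (PVU : U → V → ℝ) (hPVUnn : ∀ u v, 0 ≤ PVU u v) (hPVUsum : ∀ u, ∑ v, PVU u v = 1)
    (W : V → Z → ℝ) (hWnn : ∀ v z, 0 ≤ W v z) (hWsum : ∀ v, ∑ z, W v z = 1)
    (n : ℕ) (hn : 0 < n)
    (ρ : ℝ) (hρ0 : 0 < ρ) (hρ1 : ρ < 1) :
    avgPhi ρ
        (fun (v : Fin n → V) (z : Fin n → Z) => ∏ i, W (v i) (z i))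
        (fun (u : Fin n → U) (v : Fin n → V) => ∏ i, PVU (u i) (v i))
        (fun (u : Fin n → U) => ∏ i, PU (u i)) =
      n * avgPhi ρ W PVU PU :=
  avgPhi_iid_additive_general PU PVU hPVUnn W hWnn n ρ
end
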